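/- Let (W,S) be a Coxeter system, L ⊆ S, w ∈ W, and t a reflection with t ∉ W_L such that wt covers w in Bruhat order. Then (wt)_L ≤_R w_L, where x_L denotes the W_L-component in the parabolic decomposition x = x^L x_L and ≤_R is the right weak order. -/

import Mathlib

/-! Write `wt = a'b'` as a reduced word `α ++ β` with all letters of `β` in `L`. As `w < wt` is a
cover, a reduced word for `w` is obtained by deleting one letter; if that letter were in `β`,
then `t` would lie in `W_L`. Hence `w = π α' * b'` with `α'` shorter than `α` by one letter, so
`ℓ(w b'⁻¹) + ℓ(b') ≤ ℓ(w)`. Since `ℓ(a u) = ℓ(a) + ℓ(u)` for `a ∈ W^L` and `u ∈ W_L`, this reads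
`ℓ(b b'⁻¹) + ℓ(b') ≤ ℓ(b)`, i.e. `b' ≤_R b`.

The additivity of length rests on the strong exchange condition, which is obtained from the
action of `W` on `W × ZMod 2` in which `sᵢ` conjugates the first coordinate and flips the
second one exactly at `sᵢ`. -/

section BruhatSetup

variable {B : Type*} {W : Type*} [Group W] {M : CoxeterMatrix B}

/-- Strong Bruhat order: `u ≤ v` iff every reduced word for `v` has a sublist
that is a reduced word for `u`. -/
def BruhatLE (cs : CoxeterSystem M W) (u v : W) : Prop :=
  ∀ ω : List B, cs.IsReduced ω → cs.wordProd ω = v →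
    ∃ ω' : List B, List.Sublist ω' ω ∧ cs.IsReduced ω' ∧ cs.wordProd ω' = u

/-- Strict strong Bruhat order. -/
def BruhatLT (cs : CoxeterSystem M W) (u v : W) : Prop :=
  BruhatLE cs u v ∧ u ≠ v

/-- The standard parabolic subgroup `W_L` generated by the simple reflections in `L`. -/
def parab (cs : CoxeterSystem M W) (L : Set B) : Subgroup W :=
  Subgroup.closure (cs.simple '' L)

/-- The set `W^L` of minimal length coset representatives for `W / W_L`. -/
def minReps (cs : CoxeterSystem M W) (L : Set B) : Set W :=
  {w : W | ∀ i ∈ L, cs.length w < cs.length (w * cs.simple i)}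

/-- Right weak order: `v ≤_R w` iff `ℓ(w) = ℓ(w v⁻¹) + ℓ(v)`. -/
def leR (cs : CoxeterSystem M W) (v w : W) : Prop :=
  cs.length w = cs.length (w * v⁻¹) + cs.length v

namespace CoxeterSystem

open List

open scoped Classical

variable (cs : CoxeterSystem M W)

local prefix:100 "s" => cs.simple
local prefix:100 "π" => cs.wordProd
local prefix:100 "ℓ" => cs.length
local prefix:100 "ris " => cs.rightInvSeq

lemma simple_mul_mul_simple_eq_iff (i : B) (x y : W) : s i * x * s i = y ↔ x = s i * y * s i := by
  constructor <;> rintro rfl <;> simp [mul_assoc]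

noncomputable def parityFlip (i : B) : Equiv.Perm (W × ZMod 2) :=
  Function.Involutive.toPerm (fun p => (s i * p.1 * s i, p.2 + if p.1 = s i then 1 else 0)) <| by
    rintro ⟨x, ε⟩
    ext
    · simp [mul_assoc]
    · have : s i * s i * s i = s i := by simp
      simp only [simple_mul_mul_simple_eq_iff, this, add_assoc, CharTwo.add_self_eq_zero, add_zero]

lemma parityFlip_apply (i : B) (x : W) (ε : ZMod 2) :
    cs.parityFlip i (x, ε) = (s i * x * s i, ε + if x = s i then 1 else 0) := rfl

lemma parityFlip_mul_pow_apply (i j : B) (n : ℕ) (x : W) (ε : ZMod 2) :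
    ((cs.parityFlip i * cs.parityFlip j) ^ n) (x, ε) =
      ((s i * s j) ^ n * x * ((s i * s j) ^ n)⁻¹,
        ε + ∑ k ∈ Finset.range (2 * n), if x = (s j * s i) ^ k * s j then 1 else 0) := by
  induction n generalizing x ε with
  | zero => simp
  | succ n ih =>
    have hshift (k : ℕ) : s i * (s j * x * s j) * s i = (s j * s i) ^ k * s j ↔
        x = (s j * s i) ^ (k + 2) * s j := by
      rw [simple_mul_mul_simple_eq_iff, simple_mul_mul_simple_eq_iff, pow_succ, pow_succ']
      simp only [mul_assoc]
    rw [pow_succ, Equiv.Perm.mul_apply, Equiv.Perm.mul_apply, parityFlip_apply, parityFlip_apply,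
      ih, mul_add 2 n 1, Finset.sum_range_succ', Finset.sum_range_succ']
    simp only [hshift, simple_mul_mul_simple_eq_iff]
    ext
    · simp only [pow_succ, mul_inv_rev, inv_simple]
      group
    · simp only [zero_add, pow_zero, one_mul, pow_one, mul_assoc]
      ring

lemma isLiftable_parityFlip : M.IsLiftable cs.parityFlip := by
  intro i j
  ext ⟨x, ε⟩ : 1
  have hperiodic : ∀ k, (s j * s i) ^ (M i j + k) = (s j * s i) ^ k := by
    intro k
    rw [pow_add, simple_mul_simple_pow', one_mul]
  rw [parityFlip_mul_pow_apply, two_mul, Finset.sum_range_add]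
  simp only [hperiodic, CharTwo.add_self_eq_zero, simple_mul_simple_pow]
  simp

noncomputable def parityRep : W →* Equiv.Perm (W × ZMod 2) :=
  cs.lift ⟨cs.parityFlip, cs.isLiftable_parityFlip⟩

lemma parityRep_wordProd_apply (ω : List B) (x : W) (ε : ZMod 2) :
    cs.parityRep (π ω) (x, ε) = (π ω * x * (π ω)⁻¹, ε + count x (ris ω)) := by
  induction ω with
  | nil => simp
  | cons i ω ih =>
    have hcond : ((π ω)⁻¹ * s i * π ω == x) = decide (π ω * x * (π ω)⁻¹ = s i) := by
      rw [Bool.eq_iff_iff, beq_iff_eq, decide_eq_true_iff]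
      constructor
      · rintro rfl; group
      · intro h; rw [← h]; group
    rw [wordProd_cons, map_mul, Equiv.Perm.mul_apply, ih, parityRep, lift_apply_simple,
      parityFlip_apply, rightInvSeq, count_cons, hcond]
    ext
    · simp only [mul_inv_rev, inv_simple]
      group
    · by_cases h : π ω * x * (π ω)⁻¹ = s i <;> simp [h, add_assoc]

/-- The parity of the number of occurrences of `t` in the right inversion sequence of any word
for `w`. -/
noncomputable def inversionParity (w t : W) : ZMod 2 := (cs.parityRep w (t, 0)).2

lemma inversionParity_wordProd (ω : List B) (t : W) :
    cs.inversionParity (π ω) t = count t (ris ω) := by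
  simp [inversionParity, parityRep_wordProd_apply]

lemma parityRep_apply (w x : W) (ε : ZMod 2) :
    cs.parityRep w (x, ε) = (w * x * w⁻¹, ε + cs.inversionParity w x) := by
  obtain ⟨ω, rfl⟩ := cs.wordProd_surjective w
  rw [parityRep_wordProd_apply, inversionParity_wordProd]

lemma inversionParity_mul (u v x : W) :
    cs.inversionParity (u * v) x = cs.inversionParity v x + cs.inversionParity u (v * x * v⁻¹) := by
  calc cs.inversionParity (u * v) x = (cs.parityRep u (cs.parityRep v (x, 0))).2 := by
        rw [inversionParity, map_mul, Equiv.Perm.mul_apply]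
    _ = _ := by rw [parityRep_apply, parityRep_apply, zero_add]

lemma inversionParity_simple (i : B) (x : W) :
    cs.inversionParity (s i) x = if x = s i then 1 else 0 := by
  simp [inversionParity, parityRep, lift_apply_simple, parityFlip_apply]

lemma inversionParity_one (x : W) : cs.inversionParity 1 x = 0 := by
  simp [inversionParity]

lemma inversionParity_self_of_isReflection {t : W} (ht : cs.IsReflection t) :
    cs.inversionParity t t = 1 := by
  obtain ⟨v, i, rfl⟩ := ht
  have hconj : v⁻¹ * (v * s i * v⁻¹) * v⁻¹⁻¹ = s i := by group
  have hcancel := cs.inversionParity_mul v v⁻¹ (v * s i * v⁻¹)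
  rw [mul_inv_cancel, inversionParity_one, hconj] at hcancel
  rw [inversionParity_mul, hconj, inversionParity_mul, inversionParity_simple, if_pos rfl,
    simple_mul_simple_self, one_mul, inv_simple]
  linear_combination -hcancel

lemma inversionParity_mul_self_of_isReflection {t : W} (ht : cs.IsReflection t) (w : W) :
    cs.inversionParity (w * t) t = cs.inversionParity w t + 1 := by
  rw [inversionParity_mul, cs.inversionParity_self_of_isReflection ht, ht.mul_self, one_mul, ht.inv,
    add_comm]

lemma mem_rightInvSeq_of_inversionParity_eq_one {ω : List B} {t : W}
    (h : cs.inversionParity (π ω) t = 1) : t ∈ ris ω := by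
  rw [inversionParity_wordProd] at h
  refine count_pos_iff.mp (Nat.pos_of_ne_zero fun h0 => ?_)
  simp [h0] at h

lemma length_mul_lt_of_inversionParity_eq_one {w t : W} (h : cs.inversionParity w t = 1) :
    ℓ (w * t) < ℓ w := by
  obtain ⟨ω, hω, rfl⟩ := cs.exists_isReduced w
  exact (cs.isRightInversion_of_mem_rightInvSeq hω
    (cs.mem_rightInvSeq_of_inversionParity_eq_one h)).2

/-- The strong exchange condition. -/
theorem mem_rightInvSeq_of_length_mul_lt {ω : List B} {t : W} (ht : cs.IsReflection t)
    (h : ℓ (π ω * t) < ℓ (π ω)) : t ∈ ris ω := by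
  refine cs.mem_rightInvSeq_of_inversionParity_eq_one ?_
  by_contra hne
  have hparity : cs.inversionParity (π ω * t) t = 1 := by
    rw [inversionParity_mul_self_of_isReflection cs ht]
    generalize cs.inversionParity (π ω) t = e at hne
    revert e
    decide
  have := cs.length_mul_lt_of_inversionParity_eq_one hparity
  rw [mul_assoc, ht.mul_self, mul_one] at this
  omega

theorem exists_wordProd_eraseIdx_of_length_mul_lt {ω : List B} {t : W} (ht : cs.IsReflection t)
    (h : ℓ (π ω * t) < ℓ (π ω)) : ∃ j < ω.length, π ω * t = π (ω.eraseIdx j) := by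
  obtain ⟨j, hj, hjt⟩ := getElem_of_mem (cs.mem_rightInvSeq_of_length_mul_lt ht h)
  refine ⟨j, by simpa using hj, ?_⟩
  rw [← wordProd_mul_getD_rightInvSeq, getD_eq_getElem _ _ hj, hjt]

/-- The deletion condition. -/
theorem exists_isReduced_sublist (ω : List B) : ∃ ρ, ρ <+ ω ∧ cs.IsReduced ρ ∧ π ρ = π ω := by
  induction ω using List.reverseRecOn with
  | nil => exact ⟨[], Sublist.slnil, by simp [IsReduced], rfl⟩
  | append_singleton ω i ih =>
    obtain ⟨ρ, hρω, hρ, hρπ⟩ := ih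
    have hπ : π (ρ ++ [i]) = π (ω ++ [i]) := by simp [wordProd_append, hρπ]
    rcases cs.length_mul_simple (π ρ) i with hlong | hshort
    · refine ⟨ρ ++ [i], hρω.append_right [i], ?_, hπ⟩
      simp [IsReduced, wordProd_append, hlong, hρ.eq]
    · obtain ⟨j, hj, hρj⟩ :=
        cs.exists_wordProd_eraseIdx_of_length_mul_lt (ω := ρ) (cs.isReflection_simple i) (by omega)
      refine ⟨ρ.eraseIdx j, (eraseIdx_sublist ρ j).trans (hρω.trans (sublist_append_left ω [i])),
        ?_, by rw [← hρj, ← wordProd_concat, concat_eq_append, hπ]⟩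
      rw [IsReduced, ← hρj, length_eraseIdx_of_lt hj]
      have := hρ.eq
      omega

theorem length_mul_conj_lt_or_length_mul_lt_of_append {α δ : List B} {t : W}
    (ht : cs.IsReflection t) (h : ℓ (π (α ++ δ) * t) < ℓ (π (α ++ δ))) :
    ℓ (π α * (π δ * t * (π δ)⁻¹)) < α.length ∨ ℓ (π δ * t) < δ.length := by
  obtain ⟨j, hj, hjπ⟩ := cs.exists_wordProd_eraseIdx_of_length_mul_lt ht h
  rw [length_append] at hj
  by_cases hjα : j < α.length
  · left
    rw [eraseIdx_append_of_lt_length hjα, wordProd_append, wordProd_append] at hjπ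
    have hconj : π α * (π δ * t * (π δ)⁻¹) = π (α.eraseIdx j) := by
      rw [← mul_assoc, ← mul_assoc, hjπ, mul_inv_cancel_right]
    rw [hconj]
    refine (cs.length_wordProd_le _).trans_lt ?_
    rw [length_eraseIdx_of_lt hjα]
    omega
  · right
    rw [eraseIdx_append_of_length_le (by omega), wordProd_append, wordProd_append, mul_assoc,
      mul_right_inj] at hjπ
    rw [hjπ]
    refine (cs.length_wordProd_le _).trans_lt ?_
    rw [length_eraseIdx_of_lt (by omega)]
    omega

variable {L : Set B}

lemma wordProd_mem_parab {ω : List B} (hω : ∀ i ∈ ω, i ∈ L) : π ω ∈ parab cs L :=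
  Subgroup.list_prod_mem _ <| forall_mem_map.mpr fun i hi =>
    Subgroup.subset_closure ⟨i, hω i hi, rfl⟩

lemma exists_word_of_mem_parab {u : W} (hu : u ∈ parab cs L) :
    ∃ ω : List B, (∀ i ∈ ω, i ∈ L) ∧ π ω = u := by
  induction hu using Subgroup.closure_induction with
  | mem x hx =>
    obtain ⟨i, hi, rfl⟩ := hx
    exact ⟨[i], by simpa using hi, wordProd_singleton cs i⟩
  | one => exact ⟨[], by simp, wordProd_nil cs⟩
  | mul x y _ _ hx hy =>
    obtain ⟨ω, hωL, rfl⟩ := hx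
    obtain ⟨ω', hω'L, rfl⟩ := hy
    exact ⟨ω ++ ω', fun i hi => (mem_append.mp hi).elim (hωL i) (hω'L i), wordProd_append cs ω ω'⟩
  | inv x _ hx =>
    obtain ⟨ω, hωL, rfl⟩ := hx
    exact ⟨ω.reverse, by simpa using hωL, wordProd_reverse cs ω⟩

lemma exists_isReduced_of_mem_parab {u : W} (hu : u ∈ parab cs L) :
    ∃ ω : List B, (∀ i ∈ ω, i ∈ L) ∧ cs.IsReduced ω ∧ π ω = u := by
  obtain ⟨ω, hωL, rfl⟩ := cs.exists_word_of_mem_parab hu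
  obtain ⟨ρ, hρω, hρ, hρπ⟩ := cs.exists_isReduced_sublist ω
  exact ⟨ρ, fun i hi => hωL i (hρω.subset hi), hρ, hρπ⟩

theorem length_mul_wordProd_of_forall_length_le {a : W}
    (hmin : ∀ z ∈ parab cs L, ℓ a ≤ ℓ (a * z)) {δ : List B} (hδL : ∀ i ∈ δ, i ∈ L)
    (hδ : cs.IsReduced δ) : ℓ (a * π δ) = ℓ a + δ.length := by
  induction δ using List.reverseRecOn with
  | nil => simp
  | append_singleton δ i ih =>
    have hδL' : ∀ j ∈ δ, j ∈ L := fun j hj => hδL j (mem_append_left _ hj)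
    have hlen := ih hδL' (by simpa using hδ.take δ.length)
    rw [wordProd_append, wordProd_singleton, ← mul_assoc, length_append, length_singleton]
    suffices ¬ ℓ (a * π δ * s i) + 1 = ℓ (a * π δ) by
      have := cs.length_mul_simple (a * π δ) i
      omega
    intro hshort
    obtain ⟨α, hα, rfl⟩ := cs.exists_isReduced a
    rw [← wordProd_append] at hshort
    rcases cs.length_mul_conj_lt_or_length_mul_lt_of_append (cs.isReflection_simple i)
      (by omega : ℓ (π (α ++ δ) * s i) < ℓ (π (α ++ δ))) with hconj | hright
    · have hδmem := cs.wordProd_mem_parab hδL'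
      have hmem : π δ * s i * (π δ)⁻¹ ∈ parab cs L :=
        mul_mem (mul_mem hδmem (Subgroup.subset_closure ⟨i, hδL i (by simp), rfl⟩)) (inv_mem hδmem)
      have := hmin _ hmem
      have := hα.eq
      omega
    · have := hδ.eq
      rw [wordProd_append, wordProd_singleton, length_append, length_singleton] at this
      omega

theorem length_le_length_mul_of_mem_minReps {a : W} (ha : a ∈ minReps cs L) :
    ∀ z ∈ parab cs L, ℓ a ≤ ℓ (a * z) := by
  set z₀ := Function.argminOn (fun z => ℓ (a * z)) (parab cs L : Set W) ⟨1, one_mem _⟩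
  have hz₀ : z₀ ∈ parab cs L := Function.argminOn_mem _ _ _
  have hz₀min (z : W) (hz : z ∈ parab cs L) : ℓ (a * z₀) ≤ ℓ (a * z) :=
    not_lt.mp (Function.not_lt_argminOn (fun z => ℓ (a * z)) (parab cs L : Set W) hz)
  have hmin (z : W) (hz : z ∈ parab cs L) : ℓ (a * z₀) ≤ ℓ (a * z₀ * z) := by
    rw [mul_assoc]
    exact hz₀min _ (mul_mem hz₀ hz)
  suffices ℓ a ≤ ℓ (a * z₀) from fun z hz => this.trans (hz₀min z hz)
  obtain ⟨δ, hδL, hδ, hδπ⟩ := cs.exists_isReduced_of_mem_parab (inv_mem hz₀)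
  rcases eq_nil_or_concat' δ with rfl | ⟨δ, i, rfl⟩
  · rw [wordProd_nil, eq_comm, inv_eq_one] at hδπ
    simp [hδπ]
  · -- `a = (a z₀) z₀⁻¹` with lengths adding up, so dropping the last letter `sᵢ` of `z₀⁻¹`
    -- would shorten `a`.
    have hδL' : ∀ j ∈ δ, j ∈ L := fun j hj => hδL j (mem_append_left _ hj)
    have hlen := cs.length_mul_wordProd_of_forall_length_le hmin hδL hδ
    have hlen' := cs.length_mul_wordProd_of_forall_length_le hmin hδL'
      (by simpa using hδ.take δ.length)
    rw [hδπ, mul_inv_cancel_right, length_append, length_singleton] at hlen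
    have hδz₀ : π δ = z₀⁻¹ * s i := by
      rw [← hδπ, wordProd_append, wordProd_singleton, simple_mul_simple_cancel_right]
    rw [hδz₀, ← mul_assoc, mul_inv_cancel_right] at hlen'
    have := ha i (hδL i (by simp))
    omega

theorem length_mul_of_mem_minReps {a u : W} (ha : a ∈ minReps cs L) (hu : u ∈ parab cs L) :
    ℓ (a * u) = ℓ a + ℓ u := by
  obtain ⟨δ, hδL, hδ, rfl⟩ := cs.exists_isReduced_of_mem_parab hu
  rw [cs.length_mul_wordProd_of_forall_length_le (cs.length_le_length_mul_of_mem_minReps ha) hδL hδ,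
    hδ.eq]

theorem leR_of_length_mul_inv_add_le {a b c : W} (ha : a ∈ minReps cs L) (hb : b ∈ parab cs L)
    (hc : c ∈ parab cs L) (h : ℓ (a * b * c⁻¹) + ℓ c ≤ ℓ a + ℓ b) : leR cs c b := by
  have hsplit := cs.length_mul_of_mem_minReps ha (mul_mem hb (inv_mem hc))
  have htri := cs.length_mul_le (b * c⁻¹) c
  rw [inv_mul_cancel_right] at htri
  rw [← mul_assoc] at hsplit
  rw [leR]
  omega

end CoxeterSystem

theorem statement_11_general (cs : CoxeterSystem M W) (L : Set B) (w t : W)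
    (htL : t ∉ parab cs L)
    (hlt : BruhatLT cs w (w * t)) (hcov : cs.length (w * t) = cs.length w + 1)
    (a b a' b' : W)
    (ha : a ∈ minReps cs L) (hb : b ∈ parab cs L) (hab : w = a * b)
    (hlab : cs.length w = cs.length a + cs.length b)
    (hb' : b' ∈ parab cs L) (hab' : w * t = a' * b')
    (hlab' : cs.length (w * t) = cs.length a' + cs.length b') :
    leR cs b' b := by
  obtain ⟨α, hα, rfl⟩ := cs.exists_isReduced a'
  obtain ⟨β, hβL, hβ, rfl⟩ := cs.exists_isReduced_of_mem_parab hb'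
  have hαβ : cs.IsReduced (α ++ β) := by
    rw [CoxeterSystem.IsReduced, cs.wordProd_append, ← hab', hlab', hα.eq, hβ.eq,
      List.length_append]
  obtain ⟨ω, hω, hωred, hωπ⟩ := hlt.1 _ hαβ (by rw [cs.wordProd_append, hab'])
  obtain ⟨α', β', rfl, hα', hβ'⟩ := List.sublist_append_iff.mp hω
  have hlen := hωred.eq
  rw [hωπ, List.length_append] at hlen
  -- The letter deleted from `α ++ β` lies in `α`, since otherwise `t ∈ W_L`.
  obtain rfl : β = β' := by
    by_contra hne
    have := mt hβ'.eq_of_length (Ne.symm hne)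
    obtain rfl : α' = α := hα'.eq_of_length <| by
      have := hα'.length_le
      have := hβ'.length_le
      have := hα.eq
      have := hβ.eq
      omega
    rw [← hωπ, cs.wordProd_append, mul_assoc, mul_right_inj] at hab'
    apply htL
    rw [← inv_mul_eq_of_eq_mul hab'.symm]
    exact mul_mem (inv_mem (cs.wordProd_mem_parab fun i hi => hβL i (hβ'.subset hi))) hb'
  refine cs.leR_of_length_mul_inv_add_le ha hb hb' ?_
  rw [← hab, ← hlab, hlen, ← hωπ, cs.wordProd_append, mul_inv_cancel_right, hβ.eq]
  exact Nat.add_le_add_right (cs.length_wordProd_le α') _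

theorem statement_11 (cs : CoxeterSystem M W) (L : Set B) (w t : W)
    (ht : cs.IsReflection t) (htL : t ∉ parab cs L)
    (hlt : BruhatLT cs w (w * t)) (hcov : cs.length (w * t) = cs.length w + 1)
    (a b a' b' : W)
    (ha : a ∈ minReps cs L) (hb : b ∈ parab cs L) (hab : w = a * b)
    (hlab : cs.length w = cs.length a + cs.length b)
    (ha' : a' ∈ minReps cs L) (hb' : b' ∈ parab cs L) (hab' : w * t = a' * b')
    (hlab' : cs.length (w * t) = cs.length a' + cs.length b') :
    leR cs b' b :=
  statement_11_general cs L w t htL hlt hcov a b a' b' ha hb hab hlab hb' hab' hlab'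

end BruhatSetup
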